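/- arXiv:1703.01380 — 6 statements merged into one kernel-verified Lean document; each statement's English description precedes it below -/
import Mathlib

section
/- Let I_opt(r) denote the unique minimizer of a ↦ r·L·p(a) + a over A = [I_min, I_max]. Then I_opt is nondecreasing in r: if 0 ≤ r1 < r2 then I_opt(r1) ≤ I_opt(r2). -/
/-- The unique minimizer `I_opt(r)` of `a ↦ r·L·p(a) + a` over `[Imin, Imax]` is
nondecreasing in `r`: if `0 ≤ r1 < r2` then `I_opt(r1) ≤ I_opt(r2)`. -/
theorem stmt_1 (Imin Imax L : ℝ) (hImin : 0 ≤ Imin) (hII : Imin < Imax) (hL : 0 < L)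
    (p : ℝ → ℝ)
    (hpc : ContinuousOn p (Set.Icc Imin Imax))
    (hpconv : StrictConvexOn ℝ (Set.Icc Imin Imax) p)
    (hpdec : StrictAntiOn p (Set.Icc Imin Imax))
    (hp01 : ∀ x ∈ Set.Icc Imin Imax, p x ∈ Set.Icc (0:ℝ) 1)
    (Iopt : ℝ → ℝ)
    (hIoptMem : ∀ r : ℝ, 0 ≤ r → Iopt r ∈ Set.Icc Imin Imax)
    (hIoptMin : ∀ r : ℝ, 0 ≤ r → ∀ a' ∈ Set.Icc Imin Imax,
        r * L * p (Iopt r) + Iopt r ≤ r * L * p a' + a')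
    (hIoptUniq : ∀ r : ℝ, 0 ≤ r → ∀ a ∈ Set.Icc Imin Imax,
        (∀ a' ∈ Set.Icc Imin Imax, r * L * p a + a ≤ r * L * p a' + a') → a = Iopt r)
    (r1 r2 : ℝ) (hr1 : 0 ≤ r1) (hr12 : r1 < r2) :
    Iopt r1 ≤ Iopt r2 := by
  by_contra h
  push_neg at h
  have hr2 : (0:ℝ) ≤ r2 := le_of_lt (lt_of_le_of_lt hr1 hr12)
  have m1 := hIoptMem r1 hr1
  have m2 := hIoptMem r2 hr2
  have h1 := hIoptMin r1 hr1 (Iopt r2) m2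
  have h2 := hIoptMin r2 hr2 (Iopt r1) m1
  have hp : p (Iopt r1) < p (Iopt r2) := hpdec m2 m1 h
  nlinarith
end

section
/- If 0 ≤ r1 < r2 and I_min < I_opt(r1) < I_max, then I_opt(r1) < I_opt(r2); similarly if I_min < I_opt(r2) < I_max and r1 < r2 then I_opt(r1) < I_opt(r2). -/
/-- Strict monotonicity of `I_opt` at interior points: if `0 ≤ r1 < r2` and
`I_opt(r1)` (resp. `I_opt(r2)`) lies in the interior `(I_min, I_max)`, then
`I_opt(r1) < I_opt(r2)`. -/
theorem stmt_3 (Imin Imax L : ℝ) (hImin : 0 ≤ Imin) (hII : Imin < Imax) (hL : 0 < L)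
    (p : ℝ → ℝ)
    (hpc : ContinuousOn p (Set.Icc Imin Imax))
    (hpconv : StrictConvexOn ℝ (Set.Icc Imin Imax) p)
    (hpdec : StrictAntiOn p (Set.Icc Imin Imax))
    (hp01 : ∀ x ∈ Set.Icc Imin Imax, p x ∈ Set.Icc (0:ℝ) 1)
    (hpdiff : ContDiffOn ℝ 1 p (Set.Ioo Imin Imax))
    (Iopt : ℝ → ℝ)
    (hIoptMem : ∀ r : ℝ, 0 ≤ r → Iopt r ∈ Set.Icc Imin Imax)
    (hIoptMin : ∀ r : ℝ, 0 ≤ r → ∀ a' ∈ Set.Icc Imin Imax,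
        r * L * p (Iopt r) + Iopt r ≤ r * L * p a' + a')
    (hIoptUniq : ∀ r : ℝ, 0 ≤ r → ∀ a ∈ Set.Icc Imin Imax,
        (∀ a' ∈ Set.Icc Imin Imax, r * L * p a + a ≤ r * L * p a' + a') → a = Iopt r)
    (r1 r2 : ℝ) (hr1 : 0 ≤ r1) (hr12 : r1 < r2) :
    (Imin < Iopt r1 → Iopt r1 < Imax → Iopt r1 < Iopt r2) ∧
      (Imin < Iopt r2 → Iopt r2 < Imax → Iopt r1 < Iopt r2) := by
  have hr2 : 0 ≤ r2 := le_of_lt (lt_of_le_of_lt hr1 hr12)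
  have m1 := hIoptMem r1 hr1
  have m2 := hIoptMem r2 hr2
  have hle : Iopt r1 ≤ Iopt r2 := by
    by_contra h
    push_neg at h
    have e1 := hIoptMin r1 hr1 (Iopt r2) m2
    have e2 := hIoptMin r2 hr2 (Iopt r1) m1
    have hp := hpdec m2 m1 h
    nlinarith
  have key : ∀ a, Imin < a → a < Imax → a = Iopt r1 → a = Iopt r2 → False := by
    intro a h1 h2 ha1 ha2
    have haI : a ∈ Set.Ioo Imin Imax := ⟨h1, h2⟩
    have hdiff : DifferentiableAt ℝ p a :=
      (hpdiff.differentiableOn one_ne_zero).differentiableAt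
        (IsOpen.mem_nhds isOpen_Ioo haI)
    set d := deriv p a with hd
    have hpd : HasDerivAt p d a := hdiff.hasDerivAt
    have hnhds : Set.Icc Imin Imax ∈ nhds a := Icc_mem_nhds h1 h2
    have hmin : ∀ r, 0 ≤ r → a = Iopt r → r * L * d + 1 = 0 := by
      intro r hr har
      have hf : HasDerivAt (fun x => r * L * p x + x) (r * L * d + 1) a := by
        simpa using ((hpd.const_mul (r * L)).fun_add (hasDerivAt_id' a))
      have hloc : IsLocalMin (fun x => r * L * p x + x) a := by
        apply Filter.eventually_of_mem hnhds
        intro x hx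
        have := hIoptMin r hr x hx
        rw [← har] at this
        exact this
      exact hloc.hasDerivAt_eq_zero hf
    have e1 := hmin r1 hr1 ha1
    have e2 := hmin r2 hr2 ha2
    nlinarith
  constructor
  · intro ha hb
    rcases lt_or_eq_of_le hle with h | h
    · exact h
    · exact (key _ ha hb rfl h).elim
  · intro ha hb
    rcases lt_or_eq_of_le hle with h | h
    · exact h
    · exact (key (Iopt r2) ha hb h.symm rfl).elim
end

section
/- For every population size vector s, there exists a pure-strategy Nash equilibrium of the population game; that is, there exists a ∈ A^D such that for every d ∈ {1,…,D}, a_d = I_opt(τ_A + d · e(a; s)), where e(a; s) = g(τ_A · β_IA · Σ_d w_d(s) · p(a_d)). -/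
open Filter Topology

/-- Continuity of the unique-minimizer map `Iopt` on `[0,∞)`. -/
lemma iopt_continuousOn (Imin Imax L : ℝ) (p Iopt : ℝ → ℝ)
    (hpc : ContinuousOn p (Set.Icc Imin Imax))
    (hIoptMem : ∀ r : ℝ, 0 ≤ r → Iopt r ∈ Set.Icc Imin Imax)
    (hIoptMin : ∀ r : ℝ, 0 ≤ r → ∀ a' ∈ Set.Icc Imin Imax,
        r * L * p (Iopt r) + Iopt r ≤ r * L * p a' + a')
    (hIoptUniq : ∀ r : ℝ, 0 ≤ r → ∀ a ∈ Set.Icc Imin Imax,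
        (∀ a' ∈ Set.Icc Imin Imax, r * L * p a + a ≤ r * L * p a' + a') → a = Iopt r) :
    ContinuousOn Iopt (Set.Ici 0) := by
  intro r₀ hr₀
  have hr₀' : (0:ℝ) ≤ r₀ := hr₀
  rw [ContinuousWithinAt]
  apply tendsto_of_subseq_tendsto
  intro ns hns
  -- eventually ns n ∈ Ici 0
  have hmem : ∀ᶠ n in atTop, ns n ∈ Set.Ici (0:ℝ) := hns.eventually_mem self_mem_nhdsWithin
  obtain ⟨N, hN⟩ := eventually_atTop.1 hmem
  set v : ℕ → ℝ := fun n => ns (n + N) with hv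
  have hv0 : ∀ n, (0:ℝ) ≤ v n := fun n => hN (n + N) (Nat.le_add_left _ _)
  have hvlim : Tendsto v atTop (𝓝 r₀) :=
    (hns.mono_right nhdsWithin_le_nhds).comp (tendsto_add_atTop_nat N)
  -- extract convergent subsequence of Iopt ∘ v
  obtain ⟨a, haK, φ, hφ, hlim⟩ :=
    (isCompact_Icc (a := Imin) (b := Imax)).tendsto_subseq
      (x := fun n => Iopt (v n)) (fun n => hIoptMem _ (hv0 n))
  have hvφ : Tendsto (fun n => v (φ n)) atTop (𝓝 r₀) := hvlim.comp hφ.tendsto_atTop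
  -- p (Iopt (v (φ n))) → p a
  have hplim : Tendsto (fun n => p (Iopt (v (φ n)))) atTop (𝓝 (p a)) := by
    apply (hpc a haK).tendsto.comp
    exact tendsto_nhdsWithin_of_tendsto_nhds_of_eventually_within _ hlim
      (Eventually.of_forall fun n => hIoptMem _ (hv0 (φ n)))
  -- a is a minimizer at r₀
  have hamin : ∀ a' ∈ Set.Icc Imin Imax, r₀ * L * p a + a ≤ r₀ * L * p a' + a' := by
    intro a' ha'
    have h1 : Tendsto (fun n => v (φ n) * L * p (Iopt (v (φ n))) + Iopt (v (φ n)))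
        atTop (𝓝 (r₀ * L * p a + a)) := ((hvφ.mul_const L).mul hplim).add hlim
    have h2 : Tendsto (fun n => v (φ n) * L * p a' + a') atTop (𝓝 (r₀ * L * p a' + a')) :=
      ((hvφ.mul_const L).mul_const (p a')).add_const a'
    exact le_of_tendsto_of_tendsto' h1 h2 fun n => hIoptMin _ (hv0 (φ n)) a' ha'
  have ha : a = Iopt r₀ := hIoptUniq r₀ hr₀' a haK hamin
  exact ⟨fun n => φ n + N, by simpa [hv, ha, Function.comp_def] using hlim⟩

/-- Existence of a pure-strategy Nash equilibrium of the population game: there is a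
profile `a ∈ A^D` such that for every degree `d ∈ {1,…,D}`,
`a_d = I_opt(τ_A + d · e(a;s))` where `e(a;s) = g(τ_A·β_IA·Σ_{d'} w_{d'}(s)·p(a_{d'}))`
and `w_d(s) = d·s_d / Σ_{d'} d'·s_{d'}`. -/
theorem stmt_5 (D : ℕ) (hD : 1 ≤ D) (Imin Imax L τA βIA : ℝ)
    (hImin : 0 ≤ Imin) (hII : Imin < Imax) (hL : 0 < L)
    (hτ : τA ∈ Set.Ioc (0:ℝ) 1) (hβ : βIA ∈ Set.Ioc (0:ℝ) 1)
    (p : ℝ → ℝ)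
    (hpc : ContinuousOn p (Set.Icc Imin Imax))
    (hpconv : StrictConvexOn ℝ (Set.Icc Imin Imax) p)
    (hpdec : StrictAntiOn p (Set.Icc Imin Imax))
    (hp01 : ∀ x ∈ Set.Icc Imin Imax, p x ∈ Set.Icc (0:ℝ) 1)
    (g : ℝ → ℝ) (hgc : Continuous g) (hgnn : ∀ z : ℝ, 0 ≤ z → 0 ≤ g z)
    (s : ℕ → ℝ) (hs : ∀ d ∈ Finset.Icc 1 D, 0 < s d)
    (w : ℕ → ℝ)
    (hw : ∀ d ∈ Finset.Icc 1 D,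
        w d = ((d : ℝ) * s d) / (∑ d' ∈ Finset.Icc 1 D, (d' : ℝ) * s d'))
    (Iopt : ℝ → ℝ)
    (hIoptMem : ∀ r : ℝ, 0 ≤ r → Iopt r ∈ Set.Icc Imin Imax)
    (hIoptMin : ∀ r : ℝ, 0 ≤ r → ∀ a' ∈ Set.Icc Imin Imax,
        r * L * p (Iopt r) + Iopt r ≤ r * L * p a' + a')
    (hIoptUniq : ∀ r : ℝ, 0 ≤ r → ∀ a ∈ Set.Icc Imin Imax,
        (∀ a' ∈ Set.Icc Imin Imax, r * L * p a + a ≤ r * L * p a' + a') → a = Iopt r) :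
    ∃ a : ℕ → ℝ, (∀ d ∈ Finset.Icc 1 D, a d ∈ Set.Icc Imin Imax) ∧
      ∀ d ∈ Finset.Icc 1 D,
        a d = Iopt (τA + (d : ℝ) *
          g (τA * βIA * ∑ d' ∈ Finset.Icc 1 D, w d' * p (a d'))) := by
  have hτ0 : 0 < τA := hτ.1
  have hβ0 : 0 < βIA := hβ.1
  -- basic facts about w
  have hSpos : 0 < ∑ d' ∈ Finset.Icc 1 D, (d' : ℝ) * s d' := by
    apply Finset.sum_pos
    · intro d hd
      have hd1 : 1 ≤ d := (Finset.mem_Icc.1 hd).1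
      exact mul_pos (by exact_mod_cast Nat.lt_of_lt_of_le Nat.zero_lt_one hd1) (hs d hd)
    · exact Finset.nonempty_Icc.2 hD
  have hwnn : ∀ d ∈ Finset.Icc 1 D, 0 ≤ w d := by
    intro d hd
    rw [hw d hd]
    have hd1 : 1 ≤ d := (Finset.mem_Icc.1 hd).1
    have : (0:ℝ) ≤ (d:ℝ) * s d :=
      le_of_lt (mul_pos (by exact_mod_cast Nat.lt_of_lt_of_le Nat.zero_lt_one hd1) (hs d hd))
    positivity
  have hwsum : ∑ d ∈ Finset.Icc 1 D, w d = 1 := by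
    rw [Finset.sum_congr rfl hw, ← Finset.sum_div, div_self (ne_of_gt hSpos)]
  -- the scalar map t ↦ ∑ w d' * p (Iopt (τA + d' t))
  set P : ℝ → ℝ := fun t => ∑ d' ∈ Finset.Icc 1 D, w d' * p (Iopt (τA + (d' : ℝ) * t)) with hP
  have harg : ∀ (d : ℕ) (t : ℝ), 0 ≤ t → (0:ℝ) ≤ τA + (d : ℝ) * t := by
    intro d t ht
    have : (0:ℝ) ≤ (d : ℝ) * t := mul_nonneg (Nat.cast_nonneg d) ht
    linarith
  have hP01 : ∀ t : ℝ, 0 ≤ t → P t ∈ Set.Icc (0:ℝ) 1 := by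
    intro t ht
    have hterm : ∀ d ∈ Finset.Icc 1 D,
        p (Iopt (τA + (d : ℝ) * t)) ∈ Set.Icc (0:ℝ) 1 := fun d _ =>
      hp01 _ (hIoptMem _ (harg d t ht))
    constructor
    · exact Finset.sum_nonneg fun d hd =>
        mul_nonneg (hwnn d hd) (hterm d hd).1
    · calc P t ≤ ∑ d ∈ Finset.Icc 1 D, w d :=
            Finset.sum_le_sum fun d hd => by
              have := (hterm d hd).2
              nlinarith [hwnn d hd]
        _ = 1 := hwsum
  -- max of g on [0, τA*βIA]
  have hτβ : (0:ℝ) ≤ τA * βIA := le_of_lt (mul_pos hτ0 hβ0)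
  obtain ⟨zm, hzm, hzmax⟩ := (isCompact_Icc (a := (0:ℝ)) (b := τA * βIA)).exists_isMaxOn
    ⟨0, Set.left_mem_Icc.2 hτβ⟩ hgc.continuousOn
  set C : ℝ := g zm with hC
  have hC0 : 0 ≤ C := le_trans (hgnn 0 le_rfl) (hzmax (Set.left_mem_Icc.2 hτβ))
  -- the scalar fixed-point map F
  set F : ℝ → ℝ := fun t => g (τA * βIA * P t) with hF
  have hFmem : ∀ t : ℝ, 0 ≤ t → F t ∈ Set.Icc (0:ℝ) C := by
    intro t ht
    have h01 := hP01 t ht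
    have hargmem : τA * βIA * P t ∈ Set.Icc (0:ℝ) (τA * βIA) := by
      constructor
      · exact mul_nonneg hτβ h01.1
      · nlinarith [h01.2]
    exact ⟨hgnn _ hargmem.1, hzmax hargmem⟩
  -- continuity of F on [0, ∞)
  have hIc : ContinuousOn Iopt (Set.Ici 0) :=
    iopt_continuousOn Imin Imax L p Iopt hpc hIoptMem hIoptMin hIoptUniq
  have hpIc : ContinuousOn (fun r => p (Iopt r)) (Set.Ici (0:ℝ)) :=
    hpc.comp hIc fun r hr => hIoptMem r hr
  have hPc : ContinuousOn P (Set.Ici (0:ℝ)) := by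
    apply continuousOn_finset_sum
    intro d hd
    apply ContinuousOn.mul continuousOn_const
    apply hpIc.comp ((continuous_const.add (continuous_const.mul continuous_id)).continuousOn)
    intro t ht
    exact harg d t ht
  have hFc : ContinuousOn F (Set.Ici (0:ℝ)) :=
    hgc.comp_continuousOn (continuousOn_const.mul hPc)
  -- fixed point of F via IVT
  obtain ⟨t, htmem, htfix⟩ : ∃ t ∈ Set.Icc (0:ℝ) C, F t = t := by
    have hsub : Set.Icc (0:ℝ) C ⊆ Set.Ici 0 := fun x hx => hx.1
    have hcont : ContinuousOn (fun t => F t - t) (Set.Icc 0 C) :=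
      (hFc.mono hsub).sub continuousOn_id
    have h0 : (0:ℝ) ∈ Set.Icc (F C - C) (F 0 - 0) := by
      constructor
      · have := (hFmem C hC0).2; linarith
      · have := (hFmem 0 le_rfl).1; linarith
    obtain ⟨t, ht, ht0⟩ := intermediate_value_Icc' hC0 hcont h0
    have ht0' : F t - t = 0 := ht0
    exact ⟨t, ht, by linarith⟩
  -- build the equilibrium profile
  refine ⟨fun d => Iopt (τA + (d : ℝ) * t), fun d _ => hIoptMem _ (harg d t htmem.1), ?_⟩
  intro d _
  have : (∑ d' ∈ Finset.Icc 1 D, w d' * p (Iopt (τA + (d' : ℝ) * t))) = P t := rfl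
  rw [this]
  have : g (τA * βIA * P t) = t := htfix
  rw [this]
end

section
/- If a¹ and a² are two pure-strategy Nash equilibria of the population game (for the same population size vector s), then their risk exposures coincide: e(a¹; s) = e(a²; s). Consequently the pure-strategy Nash equilibrium is unique: a¹ = a². -/
/-- Uniqueness of the pure-strategy Nash equilibrium: if `a¹` and `a²` are both
pure-strategy NEs of the population game (same population size vector `s`), then their
risk exposures coincide, `e(a¹;s) = e(a²;s)`, and consequently `a¹ = a²` (on `{1,…,D}`). -/
theorem stmt_6 (D : ℕ) (hD : 1 ≤ D) (Imin Imax L τA βIA : ℝ)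
    (hImin : 0 ≤ Imin) (hII : Imin < Imax) (hL : 0 < L)
    (hτ : τA ∈ Set.Ioc (0:ℝ) 1) (hβ : βIA ∈ Set.Ioc (0:ℝ) 1)
    (p : ℝ → ℝ)
    (hpc : ContinuousOn p (Set.Icc Imin Imax))
    (hpconv : StrictConvexOn ℝ (Set.Icc Imin Imax) p)
    (hpdec : StrictAntiOn p (Set.Icc Imin Imax))
    (hp01 : ∀ x ∈ Set.Icc Imin Imax, p x ∈ Set.Icc (0:ℝ) 1)
    (g : ℝ → ℝ) (hgc : Continuous g) (hgnn : ∀ z : ℝ, 0 ≤ z → 0 ≤ g z)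
    (hgmono : StrictMonoOn g (Set.Ici 0))
    (s : ℕ → ℝ) (hs : ∀ d ∈ Finset.Icc 1 D, 0 < s d)
    (w : ℕ → ℝ)
    (hw : ∀ d ∈ Finset.Icc 1 D,
        w d = ((d : ℝ) * s d) / (∑ d' ∈ Finset.Icc 1 D, (d' : ℝ) * s d'))
    (Iopt : ℝ → ℝ)
    (hIoptMem : ∀ r : ℝ, 0 ≤ r → Iopt r ∈ Set.Icc Imin Imax)
    (hIoptMin : ∀ r : ℝ, 0 ≤ r → ∀ a' ∈ Set.Icc Imin Imax,
        r * L * p (Iopt r) + Iopt r ≤ r * L * p a' + a')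
    (hIoptUniq : ∀ r : ℝ, 0 ≤ r → ∀ a ∈ Set.Icc Imin Imax,
        (∀ a' ∈ Set.Icc Imin Imax, r * L * p a + a ≤ r * L * p a' + a') → a = Iopt r)
    (a1 a2 : ℕ → ℝ)
    (ha1mem : ∀ d ∈ Finset.Icc 1 D, a1 d ∈ Set.Icc Imin Imax)
    (ha2mem : ∀ d ∈ Finset.Icc 1 D, a2 d ∈ Set.Icc Imin Imax)
    (hNE1 : ∀ d ∈ Finset.Icc 1 D,
        a1 d = Iopt (τA + (d : ℝ) *
          g (τA * βIA * ∑ d' ∈ Finset.Icc 1 D, w d' * p (a1 d'))))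
    (hNE2 : ∀ d ∈ Finset.Icc 1 D,
        a2 d = Iopt (τA + (d : ℝ) *
          g (τA * βIA * ∑ d' ∈ Finset.Icc 1 D, w d' * p (a2 d')))) :
    g (τA * βIA * ∑ d' ∈ Finset.Icc 1 D, w d' * p (a1 d'))
      = g (τA * βIA * ∑ d' ∈ Finset.Icc 1 D, w d' * p (a2 d')) ∧
    ∀ d ∈ Finset.Icc 1 D, a1 d = a2 d := by
  have hτ0 : 0 < τA := hτ.1
  have hβ0 : 0 < βIA := hβ.1
  -- positivity of weights
  have hTpos : 0 < ∑ d' ∈ Finset.Icc 1 D, (d' : ℝ) * s d' := by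
    apply Finset.sum_pos
    · intro d hd
      have h1 : 1 ≤ d := (Finset.mem_Icc.mp hd).1
      exact mul_pos (by exact_mod_cast h1) (hs d hd)
    · exact ⟨1, Finset.mem_Icc.mpr ⟨le_refl 1, hD⟩⟩
  have hwpos : ∀ d ∈ Finset.Icc 1 D, 0 < w d := by
    intro d hd
    rw [hw d hd]
    have h1 : 1 ≤ d := (Finset.mem_Icc.mp hd).1
    exact div_pos (mul_pos (by exact_mod_cast h1) (hs d hd)) hTpos
  -- key monotonicity
  have key : ∀ r1 r2 : ℝ, 0 ≤ r1 → r1 < r2 → p (Iopt r2) ≤ p (Iopt r1) := by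
    intro r1 r2 h0 hlt
    have h0' : (0:ℝ) ≤ r2 := le_of_lt (lt_of_le_of_lt h0 hlt)
    have h1 := hIoptMin r1 h0 (Iopt r2) (hIoptMem r2 h0')
    have h2 := hIoptMin r2 h0' (Iopt r1) (hIoptMem r1 h0)
    nlinarith [mul_pos (sub_pos.mpr hlt) hL]
  set S1 := ∑ d' ∈ Finset.Icc 1 D, w d' * p (a1 d') with hS1
  set S2 := ∑ d' ∈ Finset.Icc 1 D, w d' * p (a2 d') with hS2
  have hSnn : ∀ (a : ℕ → ℝ), (∀ d ∈ Finset.Icc 1 D, a d ∈ Set.Icc Imin Imax) →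
      0 ≤ ∑ d' ∈ Finset.Icc 1 D, w d' * p (a d') := by
    intro a hmem
    apply Finset.sum_nonneg
    intro d hd
    exact mul_nonneg (le_of_lt (hwpos d hd)) (hp01 _ (hmem d hd)).1
  have hz1 : (0:ℝ) ≤ τA * βIA * S1 :=
    mul_nonneg (mul_nonneg hτ0.le hβ0.le) (hSnn a1 ha1mem)
  have hz2 : (0:ℝ) ≤ τA * βIA * S2 :=
    mul_nonneg (mul_nonneg hτ0.le hβ0.le) (hSnn a2 ha2mem)
  set e1 := g (τA * βIA * S1) with he1
  set e2 := g (τA * βIA * S2) with he2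
  have he1nn : 0 ≤ e1 := hgnn _ hz1
  have he2nn : 0 ≤ e2 := hgnn _ hz2
  -- if e1 < e2 then termwise p(a2 d) ≤ p(a1 d)
  have main : ∀ (b1 b2 : ℕ → ℝ), (∀ d ∈ Finset.Icc 1 D, b1 d ∈ Set.Icc Imin Imax) →
      (∀ d ∈ Finset.Icc 1 D, b2 d ∈ Set.Icc Imin Imax) →
      ∀ (f1 f2 : ℝ), 0 ≤ f1 → f1 < f2 →
      (∀ d ∈ Finset.Icc 1 D, b1 d = Iopt (τA + (d:ℝ) * f1)) →
      (∀ d ∈ Finset.Icc 1 D, b2 d = Iopt (τA + (d:ℝ) * f2)) →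
      ∑ d' ∈ Finset.Icc 1 D, w d' * p (b2 d') ≤
        ∑ d' ∈ Finset.Icc 1 D, w d' * p (b1 d') := by
    intro b1 b2 hm1 hm2 f1 f2 hf1 hff hb1 hb2
    apply Finset.sum_le_sum
    intro d hd
    have h1 : 1 ≤ d := (Finset.mem_Icc.mp hd).1
    have hdpos : (0:ℝ) < (d:ℝ) := by exact_mod_cast h1
    have hr1 : 0 ≤ τA + (d:ℝ) * f1 := by positivity
    have hlt : τA + (d:ℝ) * f1 < τA + (d:ℝ) * f2 := by
      have := mul_lt_mul_of_pos_left hff hdpos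
      linarith
    have := key _ _ hr1 hlt
    rw [hb1 d hd, hb2 d hd]
    exact mul_le_mul_of_nonneg_left this (le_of_lt (hwpos d hd))
  have hee : e1 = e2 := by
    rcases lt_trichotomy e1 e2 with h | h | h
    · exfalso
      have hs21 : S2 ≤ S1 := main a1 a2 ha1mem ha2mem e1 e2 he1nn h
        (fun d hd => hNE1 d hd) (fun d hd => hNE2 d hd)
      have hz21 : τA * βIA * S2 ≤ τA * βIA * S1 :=
        mul_le_mul_of_nonneg_left hs21 (mul_nonneg hτ0.le hβ0.le)
      have : e2 ≤ e1 := (hgmono.monotoneOn) hz2 hz1 hz21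
      linarith
    · exact h
    · exfalso
      have hs12 : S1 ≤ S2 := main a2 a1 ha2mem ha1mem e2 e1 he2nn h
        (fun d hd => hNE2 d hd) (fun d hd => hNE1 d hd)
      have hz12 : τA * βIA * S1 ≤ τA * βIA * S2 :=
        mul_le_mul_of_nonneg_left hs12 (mul_nonneg hτ0.le hβ0.le)
      have : e1 ≤ e2 := (hgmono.monotoneOn) hz1 hz2 hz12
      linarith
  refine ⟨hee, fun d hd => ?_⟩
  rw [hNE1 d hd, hNE2 d hd, hee]
end

section
/- Let s¹, s² be population size vectors with Σ_{ℓ=1}^d w_ℓ(s¹) ≤ Σ_{ℓ=1}^d w_ℓ(s²) for all d, and let a¹, a² be the (unique) pure-strategy Nash equilibria under s¹ and s² respectively. Then the equilibrium risk exposures satisfy e(a¹; s¹) ≤ e(a²; s²), and consequently a¹_d ≤ a²_d for all d. -/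
lemma abel_fosd : ∀ (n : ℕ) (w1 w2 x : ℕ → ℝ),
    (∀ d, 1 ≤ d → d < n → x (d+1) ≤ x d) →
    (1 ≤ n → 0 ≤ x n) →
    (∀ d, 1 ≤ d → d ≤ n → ∑ ℓ ∈ Finset.Icc 1 d, w1 ℓ ≤ ∑ ℓ ∈ Finset.Icc 1 d, w2 ℓ) →
    ∑ d ∈ Finset.Icc 1 n, w1 d * x d ≤ ∑ d ∈ Finset.Icc 1 n, w2 d * x d := by
  intro n
  induction n with
  | zero => intro w1 w2 x _ _ _; simp
  | succ n ih =>
    intro w1 w2 x hmono hlast hW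
    have hc0 : 0 ≤ x (n+1) := hlast (by omega)
    have key : ∀ w : ℕ → ℝ, ∑ d ∈ Finset.Icc 1 (n+1), w d * x d
        = ∑ d ∈ Finset.Icc 1 n, w d * (x d - x (n+1))
          + x (n+1) * ∑ ℓ ∈ Finset.Icc 1 (n+1), w ℓ := by
      intro w
      have h1 : ∑ d ∈ Finset.Icc 1 (n+1), w d * x d
          = ∑ d ∈ Finset.Icc 1 (n+1), (w d * (x d - x (n+1)) + x (n+1) * w d) := by
        apply Finset.sum_congr rfl; intro d _; ring
      rw [h1, Finset.sum_add_distrib, ← Finset.mul_sum,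
        Finset.sum_Icc_succ_top (by omega : 1 ≤ n+1) (fun d => w d * (x d - x (n+1)))]
      simp
    rw [key w1, key w2]
    refine add_le_add ?_ ?_
    · refine ih w1 w2 (fun d => x d - x (n+1)) ?_ ?_ ?_
      · intro d h1 h2
        have := hmono d h1 (by omega)
        linarith
      · intro h1
        have := hmono n h1 (by omega)
        linarith
      · intro d h1 h2
        exact hW d h1 (by omega)
    · exact mul_le_mul_of_nonneg_left (hW (n+1) (by omega) le_rfl) hc0

/-- Theorem 3 (NE monotonicity): if the weighted degree distribution of `s¹` first-order
stochastically dominates that of `s²` (`Σ_{ℓ≤d} w_ℓ(s¹) ≤ Σ_{ℓ≤d} w_ℓ(s²)` for all `d`),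
and `a¹, a²` are the pure-strategy NEs under `s¹, s²`, then the equilibrium risk
exposures satisfy `e(a¹;s¹) ≤ e(a²;s²)` and consequently `a¹_d ≤ a²_d` for all `d`. -/
theorem stmt_11 (D : ℕ) (hD : 1 ≤ D) (Imin Imax L τA βIA : ℝ)
    (hImin : 0 ≤ Imin) (hII : Imin < Imax) (hL : 0 < L)
    (hτ : τA ∈ Set.Ioc (0:ℝ) 1) (hβ : βIA ∈ Set.Ioc (0:ℝ) 1)
    (p : ℝ → ℝ)
    (hpc : ContinuousOn p (Set.Icc Imin Imax))
    (hpconv : StrictConvexOn ℝ (Set.Icc Imin Imax) p)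
    (hpdec : StrictAntiOn p (Set.Icc Imin Imax))
    (hp01 : ∀ x ∈ Set.Icc Imin Imax, p x ∈ Set.Icc (0:ℝ) 1)
    (g : ℝ → ℝ) (hgc : Continuous g) (hgnn : ∀ z : ℝ, 0 ≤ z → 0 ≤ g z)
    (hgmono : StrictMonoOn g (Set.Ici 0))
    (s1 s2 : ℕ → ℝ)
    (hs1 : ∀ d ∈ Finset.Icc 1 D, 0 < s1 d)
    (hs2 : ∀ d ∈ Finset.Icc 1 D, 0 < s2 d)
    (w1 w2 : ℕ → ℝ)
    (hw1 : ∀ d ∈ Finset.Icc 1 D,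
        w1 d = ((d : ℝ) * s1 d) / (∑ d' ∈ Finset.Icc 1 D, (d' : ℝ) * s1 d'))
    (hw2 : ∀ d ∈ Finset.Icc 1 D,
        w2 d = ((d : ℝ) * s2 d) / (∑ d' ∈ Finset.Icc 1 D, (d' : ℝ) * s2 d'))
    (hFOSD : ∀ d ∈ Finset.Icc 1 D,
        ∑ ℓ ∈ Finset.Icc 1 d, w1 ℓ ≤ ∑ ℓ ∈ Finset.Icc 1 d, w2 ℓ)
    (Iopt : ℝ → ℝ)
    (hIoptMem : ∀ r : ℝ, 0 ≤ r → Iopt r ∈ Set.Icc Imin Imax)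
    (hIoptMin : ∀ r : ℝ, 0 ≤ r → ∀ a' ∈ Set.Icc Imin Imax,
        r * L * p (Iopt r) + Iopt r ≤ r * L * p a' + a')
    (hIoptUniq : ∀ r : ℝ, 0 ≤ r → ∀ a ∈ Set.Icc Imin Imax,
        (∀ a' ∈ Set.Icc Imin Imax, r * L * p a + a ≤ r * L * p a' + a') → a = Iopt r)
    (a1 a2 : ℕ → ℝ)
    (ha1mem : ∀ d ∈ Finset.Icc 1 D, a1 d ∈ Set.Icc Imin Imax)
    (ha2mem : ∀ d ∈ Finset.Icc 1 D, a2 d ∈ Set.Icc Imin Imax)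
    (hNE1 : ∀ d ∈ Finset.Icc 1 D,
        a1 d = Iopt (τA + (d : ℝ) *
          g (τA * βIA * ∑ d' ∈ Finset.Icc 1 D, w1 d' * p (a1 d'))))
    (hNE2 : ∀ d ∈ Finset.Icc 1 D,
        a2 d = Iopt (τA + (d : ℝ) *
          g (τA * βIA * ∑ d' ∈ Finset.Icc 1 D, w2 d' * p (a2 d')))) :
    g (τA * βIA * ∑ d' ∈ Finset.Icc 1 D, w1 d' * p (a1 d'))
      ≤ g (τA * βIA * ∑ d' ∈ Finset.Icc 1 D, w2 d' * p (a2 d')) ∧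
    ∀ d ∈ Finset.Icc 1 D, a1 d ≤ a2 d := by
  have hτβ : 0 < τA * βIA := mul_pos hτ.1 hβ.1
  -- nonstrict antitonicity of p
  have pant : ∀ a ∈ Set.Icc Imin Imax, ∀ b ∈ Set.Icc Imin Imax, a ≤ b → p b ≤ p a := by
    intro a ha b hb hab
    rcases hab.eq_or_lt with h | h
    · rw [h]
    · exact (hpdec ha hb h).le
  -- monotonicity of Iopt
  have ioptMono : ∀ r r' : ℝ, 0 ≤ r → r ≤ r' → Iopt r ≤ Iopt r' := by
    intro r r' hr hrr
    rcases hrr.eq_or_lt with h | h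
    · rw [h]
    · have hr' : 0 ≤ r' := hr.trans hrr
      have ha := hIoptMem r hr
      have hb := hIoptMem r' hr'
      have h1 := hIoptMin r hr (Iopt r') hb
      have h2 := hIoptMin r' hr' (Iopt r) ha
      by_contra hlt
      push_neg at hlt
      have hp : p (Iopt r) < p (Iopt r') := hpdec hb ha hlt
      nlinarith [mul_pos (mul_pos (sub_pos.2 h) hL) (sub_pos.2 hp)]
  -- nonnegativity of weights
  have hw1nn : ∀ d ∈ Finset.Icc 1 D, 0 ≤ w1 d := by
    intro d hd
    rw [hw1 d hd]
    apply div_nonneg (mul_nonneg (Nat.cast_nonneg d) (hs1 d hd).le)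
    exact Finset.sum_nonneg fun d' hd' =>
      mul_nonneg (Nat.cast_nonneg d') (hs1 d' hd').le
  have hw2nn : ∀ d ∈ Finset.Icc 1 D, 0 ≤ w2 d := by
    intro d hd
    rw [hw2 d hd]
    apply div_nonneg (mul_nonneg (Nat.cast_nonneg d) (hs2 d hd).le)
    exact Finset.sum_nonneg fun d' hd' =>
      mul_nonneg (Nat.cast_nonneg d') (hs2 d' hd').le
  have hp1nn : ∀ d ∈ Finset.Icc 1 D, 0 ≤ p (a1 d) :=
    fun d hd => (hp01 _ (ha1mem d hd)).1
  have hp2nn : ∀ d ∈ Finset.Icc 1 D, 0 ≤ p (a2 d) :=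
    fun d hd => (hp01 _ (ha2mem d hd)).1
  set X1 := τA * βIA * ∑ d' ∈ Finset.Icc 1 D, w1 d' * p (a1 d') with hX1def
  set X2 := τA * βIA * ∑ d' ∈ Finset.Icc 1 D, w2 d' * p (a2 d') with hX2def
  have hX1nn : 0 ≤ X1 :=
    mul_nonneg hτβ.le (Finset.sum_nonneg fun d hd => mul_nonneg (hw1nn d hd) (hp1nn d hd))
  have hX2nn : 0 ≤ X2 :=
    mul_nonneg hτβ.le (Finset.sum_nonneg fun d hd => mul_nonneg (hw2nn d hd) (hp2nn d hd))
  have hE1nn : 0 ≤ g X1 := hgnn X1 hX1nn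
  have hE2nn : 0 ≤ g X2 := hgnn X2 hX2nn
  have hrnn : ∀ (d : ℕ) (E : ℝ), 0 ≤ E → 0 ≤ τA + (d : ℝ) * E := fun d E hE =>
    add_nonneg hτ.1.le (mul_nonneg (Nat.cast_nonneg d) hE)
  -- first conclusion
  have hEle : g X1 ≤ g X2 := by
    by_contra hcon
    push_neg at hcon
    -- under hcon : g X2 < g X1, show p (a1 d) ≤ p (a2 d)
    have hptw : ∀ d ∈ Finset.Icc 1 D, p (a1 d) ≤ p (a2 d) := by
      intro d hd
      have hle : τA + (d : ℝ) * g X2 ≤ τA + (d : ℝ) * g X1 :=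
        add_le_add_right (mul_le_mul_of_nonneg_left hcon.le (Nat.cast_nonneg d)) τA
      have hmono := ioptMono _ _ (hrnn d (g X2) hE2nn) hle
      rw [← hNE1 d hd, ← hNE2 d hd] at hmono
      exact pant _ (ha2mem d hd) _ (ha1mem d hd) hmono
    -- p (a1 d) is nonincreasing in d
    have habel : ∑ d ∈ Finset.Icc 1 D, w1 d * p (a1 d)
        ≤ ∑ d ∈ Finset.Icc 1 D, w2 d * p (a1 d) := by
      refine abel_fosd D w1 w2 (fun d => p (a1 d)) ?_ ?_ ?_
      · intro d h1 h2
        have hd : d ∈ Finset.Icc 1 D := by simp; omega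
        have hd1 : d + 1 ∈ Finset.Icc 1 D := by simp; omega
        have hmono : a1 d ≤ a1 (d+1) := by
          rw [hNE1 d hd, hNE1 (d+1) hd1]
          refine ioptMono _ _ (hrnn d (g X1) hE1nn) ?_
          have : (d : ℝ) * g X1 ≤ ((d : ℝ) + 1) * g X1 := by nlinarith
          push_cast
          linarith
        exact pant _ (ha1mem d hd) _ (ha1mem (d+1) hd1) hmono
      · intro _
        exact hp1nn D (by simp [hD])
      · intro d h1 h2
        exact hFOSD d (by simp; omega)
    have hterm : ∑ d ∈ Finset.Icc 1 D, w2 d * p (a1 d)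
        ≤ ∑ d ∈ Finset.Icc 1 D, w2 d * p (a2 d) :=
      Finset.sum_le_sum fun d hd => mul_le_mul_of_nonneg_left (hptw d hd) (hw2nn d hd)
    have hX : X1 ≤ X2 := mul_le_mul_of_nonneg_left (habel.trans hterm) hτβ.le
    have : g X1 ≤ g X2 := by
      rcases hX.eq_or_lt with h | h
      · rw [h]
      · exact (hgmono hX1nn hX2nn h).le
    exact absurd this (not_le.2 hcon)
  refine ⟨hEle, fun d hd => ?_⟩
  rw [hNE1 d hd, hNE2 d hd]
  exact ioptMono _ _ (hrnn d (g X1) hE1nn)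
    (add_le_add_right (mul_le_mul_of_nonneg_left hEle (Nat.cast_nonneg d)) τA)
end

section
/- Under Assumption that ϑ is strictly increasing, if a¹ and a² are two pure-strategy Nash equilibria of the modified population game (with cost (τ_A + d·ϑ(ρ(a;s)))·L·p(a_d) + a_d), then ϑ(ρ(a¹; s)) = ϑ(ρ(a²; s)) and a¹ = a²; i.e., the modified game has a unique pure-strategy Nash equilibrium. -/
/-- Uniqueness of the pure-strategy NE of the modified population game: if `ϑ` is
strictly increasing and `a¹, a²` are two pure-strategy NEs of the modified game (cost
`(τ_A + d·ϑ(ρ(a;s)))·L·p(a_d) + a_d`), then `ϑ(ρ(a¹;s)) = ϑ(ρ(a²;s))` and `a¹ = a²`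
on `{1,…,D}`. -/
theorem stmt_19 (D : ℕ) (hD : 1 ≤ D) (Imin Imax L τA : ℝ)
    (hImin : 0 ≤ Imin) (hII : Imin < Imax) (hL : 0 < L) (hτ : 0 < τA)
    (p : ℝ → ℝ)
    (hpc : ContinuousOn p (Set.Icc Imin Imax))
    (hpconv : StrictConvexOn ℝ (Set.Icc Imin Imax) p)
    (hpdec : StrictAntiOn p (Set.Icc Imin Imax))
    (hp01 : ∀ x ∈ Set.Icc Imin Imax, p x ∈ Set.Icc (0:ℝ) 1)
    (w : ℕ → ℝ)
    (hwnn : ∀ d ∈ Finset.Icc 1 D, 0 ≤ w d)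
    (hwsum : ∑ d ∈ Finset.Icc 1 D, w d = 1)
    (ϑ : ℝ → ℝ) (hϑc : Continuous ϑ) (hϑnn : ∀ z : ℝ, 0 ≤ z → 0 ≤ ϑ z)
    (hϑmono : StrictMonoOn ϑ (Set.Ici 0))
    (Iopt : ℝ → ℝ)
    (hIoptMem : ∀ r : ℝ, 0 ≤ r → Iopt r ∈ Set.Icc Imin Imax)
    (hIoptMin : ∀ r : ℝ, 0 ≤ r → ∀ a' ∈ Set.Icc Imin Imax,
        r * L * p (Iopt r) + Iopt r ≤ r * L * p a' + a')
    (hIoptUniq : ∀ r : ℝ, 0 ≤ r → ∀ a ∈ Set.Icc Imin Imax,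
        (∀ a' ∈ Set.Icc Imin Imax, r * L * p a + a ≤ r * L * p a' + a') → a = Iopt r)
    (a1 a2 : ℕ → ℝ)
    (ha1mem : ∀ d ∈ Finset.Icc 1 D, a1 d ∈ Set.Icc Imin Imax)
    (ha2mem : ∀ d ∈ Finset.Icc 1 D, a2 d ∈ Set.Icc Imin Imax)
    (hNE1 : ∀ d ∈ Finset.Icc 1 D,
        a1 d = Iopt (τA + (d : ℝ) *
          ϑ (∑ d' ∈ Finset.Icc 1 D, w d' * p (a1 d'))))
    (hNE2 : ∀ d ∈ Finset.Icc 1 D,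
        a2 d = Iopt (τA + (d : ℝ) *
          ϑ (∑ d' ∈ Finset.Icc 1 D, w d' * p (a2 d')))) :
    ϑ (∑ d' ∈ Finset.Icc 1 D, w d' * p (a1 d'))
      = ϑ (∑ d' ∈ Finset.Icc 1 D, w d' * p (a2 d')) ∧
    ∀ d ∈ Finset.Icc 1 D, a1 d = a2 d := by
  
  have key : ∀ r r' : ℝ, 0 ≤ r → r ≤ r' → p (Iopt r') ≤ p (Iopt r) := by
    intro r r' hr hrr
    have hr' : 0 ≤ r' := le_trans hr hrr
    rcases eq_or_lt_of_le hrr with heq | hlt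
    · rw [← heq]
    · have h1 := hIoptMin r hr (Iopt r') (hIoptMem r' hr')
      have h2 := hIoptMin r' hr' (Iopt r) (hIoptMem r hr)
      nlinarith [mul_pos (sub_pos.mpr hlt) hL]
  have step : ∀ b c : ℕ → ℝ,
      (∀ d ∈ Finset.Icc 1 D, b d ∈ Set.Icc Imin Imax) →
      (∀ d ∈ Finset.Icc 1 D, c d ∈ Set.Icc Imin Imax) →
      (∀ d ∈ Finset.Icc 1 D,
        b d = Iopt (τA + (d : ℝ) * ϑ (∑ d' ∈ Finset.Icc 1 D, w d' * p (b d')))) →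
      (∀ d ∈ Finset.Icc 1 D,
        c d = Iopt (τA + (d : ℝ) * ϑ (∑ d' ∈ Finset.Icc 1 D, w d' * p (c d')))) →
      ϑ (∑ d' ∈ Finset.Icc 1 D, w d' * p (b d')) ≤
        ϑ (∑ d' ∈ Finset.Icc 1 D, w d' * p (c d')) →
      ϑ (∑ d' ∈ Finset.Icc 1 D, w d' * p (c d')) ≤
        ϑ (∑ d' ∈ Finset.Icc 1 D, w d' * p (b d')) := by
    intro b c hbmem hcmem hNEb hNEc hle
    have hSbnn : 0 ≤ ∑ d' ∈ Finset.Icc 1 D, w d' * p (b d') :=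
      Finset.sum_nonneg fun d hd => mul_nonneg (hwnn d hd) (hp01 _ (hbmem d hd)).1
    have hScnn : 0 ≤ ∑ d' ∈ Finset.Icc 1 D, w d' * p (c d') :=
      Finset.sum_nonneg fun d hd => mul_nonneg (hwnn d hd) (hp01 _ (hcmem d hd)).1
    have hθb : 0 ≤ ϑ (∑ d' ∈ Finset.Icc 1 D, w d' * p (b d')) := hϑnn _ hSbnn
    have hsum : ∑ d' ∈ Finset.Icc 1 D, w d' * p (c d') ≤
        ∑ d' ∈ Finset.Icc 1 D, w d' * p (b d') := by
      apply Finset.sum_le_sum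
      intro d hd
      have hd1 : (1:ℕ) ≤ d := (Finset.mem_Icc.mp hd).1
      have hrb : 0 ≤ τA + (d : ℝ) * ϑ (∑ d' ∈ Finset.Icc 1 D, w d' * p (b d')) := by
        positivity
      have hrr : τA + (d : ℝ) * ϑ (∑ d' ∈ Finset.Icc 1 D, w d' * p (b d')) ≤
          τA + (d : ℝ) * ϑ (∑ d' ∈ Finset.Icc 1 D, w d' * p (c d')) := by
        have : (0:ℝ) ≤ (d:ℝ) := Nat.cast_nonneg d
        nlinarith
      have hp' : p (c d) ≤ p (b d) := by
        rw [hNEb d hd, hNEc d hd]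
        exact key _ _ hrb hrr
      exact mul_le_mul_of_nonneg_left hp' (hwnn d hd)
    exact hϑmono.monotoneOn hScnn hSbnn hsum
  have hθeq : ϑ (∑ d' ∈ Finset.Icc 1 D, w d' * p (a1 d'))
      = ϑ (∑ d' ∈ Finset.Icc 1 D, w d' * p (a2 d')) := by
    rcases le_total (ϑ (∑ d' ∈ Finset.Icc 1 D, w d' * p (a1 d')))
        (ϑ (∑ d' ∈ Finset.Icc 1 D, w d' * p (a2 d'))) with h | h
    · exact le_antisymm h (step a1 a2 ha1mem ha2mem hNE1 hNE2 h)
    · exact le_antisymm (step a2 a1 ha2mem ha1mem hNE2 hNE1 h) h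
  refine ⟨hθeq, fun d hd => ?_⟩
  rw [hNE1 d hd, hNE2 d hd, hθeq]
end
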